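/- arXiv:2312.14674 — 2 statements merged into one kernel-verified Lean document; each statement's English description precedes it below -/
import Mathlib

section
/- (Loosened random coding union bound, constant Lee weight channel, ML decoding.) Let q ≥ 2, n ≥ 1, M ≥ 2 be integers, let t be an integer with 0 < t < n⌊q/2⌋, and set δ = t/n and R₂ = (log₂ M)/n. Fix any y ∈ Z_q^n and let X̃_2, …, X̃_M be independent random vectors, each uniformly distributed on Z_q^n. Then P(∃ j ∈ {2,…,M} : w_L(y − X̃_j) = t) ≤ 2^{−n [log₂ q − H_δ − R₂]⁺} = 2^{−n [D(B_δ ‖ U) − R₂]⁺}, where D(B_δ ‖ U) denotes the Kullback–Leibler divergence (base 2) between the Boltzmann distribution B_δ and the uniform distribution U on Z_q. -/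
/-- The Lee weight of the residue `i ∈ {0,…,q-1}` is `min(i, q-i)`. -/
def leeW (q i : ℕ) : ℕ := min i (q - i)

/-- The Lee weight of a vector over `Z_q`. -/
def leeWtV {q n : ℕ} (x : Fin n → ZMod q) : ℕ :=
  ∑ k, min (x k).val (q - (x k).val)

/-- `Σ_{i∈Z_q} w_L(i) e^{-β w_L(i)}`. -/
noncomputable def numFun (q : ℕ) (β : ℝ) : ℝ :=
  ∑ i ∈ Finset.range q, (leeW q i : ℝ) * Real.exp (-β * (leeW q i : ℝ))

/-- The normalization constant `Z(β) = Σ_{i∈Z_q} e^{-β w_L(i)}`. -/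
noncomputable def Zfun (q : ℕ) (β : ℝ) : ℝ :=
  ∑ i ∈ Finset.range q, Real.exp (-β * (leeW q i : ℝ))

/-- The Boltzmann pmf on `Z_q` with parameter `β`. -/
noncomputable def boltz (q : ℕ) (β : ℝ) (i : ℕ) : ℝ :=
  Real.exp (-β * (leeW q i : ℝ)) / Zfun q β

/-- Shannon entropy (base 2) of the Boltzmann distribution with parameter `β`. -/
noncomputable def entB (q : ℕ) (β : ℝ) : ℝ :=
  -∑ i ∈ Finset.range q, boltz q β i * Real.logb 2 (boltz q β i)

lemma Z_pos {q : ℕ} (hq : 1 ≤ q) (β : ℝ) : 0 < Zfun q β :=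
  Finset.sum_pos (fun i _ => Real.exp_pos _) (Finset.nonempty_range_iff.mpr (by omega))

lemma sum_boltz {q : ℕ} (hq : 1 ≤ q) (β : ℝ) : ∑ i ∈ Finset.range q, boltz q β i = 1 := by
  unfold boltz
  rw [← Finset.sum_div]
  exact div_self (Z_pos hq β).ne'

lemma entB_eq {q : ℕ} (hq : 1 ≤ q) {β d : ℝ} (hβ : numFun q β = d * Zfun q β) :
    entB q β = (β * d + Real.log (Zfun q β)) / Real.log 2 := by
  have hZ := Z_pos hq β
  have hw : ∑ i ∈ Finset.range q, boltz q β i * (leeW q i : ℝ) = d := by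
    have h1 : ∑ i ∈ Finset.range q, boltz q β i * (leeW q i : ℝ)
        = numFun q β / Zfun q β := by
      rw [numFun, Finset.sum_div]
      refine Finset.sum_congr rfl fun i _ => ?_
      unfold boltz; ring
    rw [h1, hβ, mul_div_assoc, div_self hZ.ne', mul_one]
  have key : ∀ i ∈ Finset.range q, boltz q β i * Real.logb 2 (boltz q β i)
      = -((boltz q β i * ((leeW q i : ℝ)) * β + boltz q β i * Real.log (Zfun q β)) / Real.log 2) := by
    intro i _
    rw [Real.logb, boltz, Real.log_div (Real.exp_pos _).ne' hZ.ne', Real.log_exp]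
    ring
  rw [entB, Finset.sum_congr rfl key, Finset.sum_neg_distrib, neg_neg, ← Finset.sum_div,
    Finset.sum_add_distrib, ← Finset.sum_mul, ← Finset.sum_mul, hw, sum_boltz hq, one_mul]
  ring_nf

lemma zmod_sum {q : ℕ} [NeZero q] (f : ℕ → ℝ) :
    ∑ a : ZMod q, f a.val = ∑ i ∈ Finset.range q, f i := by
  refine Finset.sum_nbij' (fun a => a.val) (fun i => (i : ZMod q))
    (fun a _ => Finset.mem_range.mpr (ZMod.val_lt a)) (fun i _ => Finset.mem_univ _)
    (fun a _ => ZMod.natCast_rightInverse a)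
    (fun i hi => ZMod.val_cast_of_lt (Finset.mem_range.mp hi)) (fun a _ => rfl)

lemma card_wt_le (q n : ℕ) [NeZero q] (β : ℝ) (t : ℕ) :
    (Nat.card {z : Fin n → ZMod q // leeWtV z = t} : ℝ) * Real.exp (-β * t)
      ≤ Zfun q β ^ n := by
  classical
  set g : ZMod q → ℝ := fun a => Real.exp (-β * (leeW q a.val : ℝ)) with hg
  have hZ : Zfun q β = ∑ a : ZMod q, g a := (zmod_sum _).symm
  have htot : Zfun q β ^ n = ∑ z : Fin n → ZMod q, ∏ k, g (z k) := by
    rw [hZ, Fintype.sum_pow]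
  have hcard : Nat.card {z : Fin n → ZMod q // leeWtV z = t}
      = (Finset.univ.filter fun z : Fin n → ZMod q => leeWtV z = t).card := by
    rw [Nat.card_eq_fintype_card, Fintype.card_subtype]
  have hterm : ∀ z ∈ Finset.univ.filter fun z : Fin n → ZMod q => leeWtV z = t,
      ∏ k, g (z k) = Real.exp (-β * t) := by
    intro z hz
    have hzt : leeWtV z = t := (Finset.mem_filter.mp hz).2
    rw [hg]
    simp only
    rw [← Real.exp_sum]
    congr 1
    rw [← Finset.mul_sum]
    congr 1
    rw [← hzt, leeWtV, Nat.cast_sum]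
    rfl
  calc (Nat.card {z : Fin n → ZMod q // leeWtV z = t} : ℝ) * Real.exp (-β * t)
      = ∑ z ∈ Finset.univ.filter (fun z : Fin n → ZMod q => leeWtV z = t), ∏ k, g (z k) := by
        rw [Finset.sum_congr rfl hterm, Finset.sum_const, hcard, nsmul_eq_mul]
    _ ≤ ∑ z : Fin n → ZMod q, ∏ k, g (z k) := by
        apply Finset.sum_le_sum_of_subset_of_nonneg (Finset.filter_subset _ _)
        intro z _ _
        exact Finset.prod_nonneg fun k _ => (Real.exp_pos _).le
    _ = Zfun q β ^ n := htot.symm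

lemma slice_card {m : ℕ} {B : Type*} [Fintype B] (j : Fin m) (Q : B → Prop) [DecidablePred Q] :
    Fintype.card {X : Fin m → B // Q (X j)}
      = Fintype.card {b : B // Q b} * Fintype.card B ^ (m - 1) := by
  classical
  have e : {X : Fin m → B // Q (X j)} ≃ {b : B // Q b} × ({i : Fin m // i ≠ j} → B) :=
    ((Equiv.funSplitAt j B).subtypeEquiv (fun X => Iff.rfl)).trans
      Equiv.prodSubtypeFstEquivSubtypeProd
  rw [Fintype.card_congr e, Fintype.card_prod, Fintype.card_fun]
  congr 2
  rw [Fintype.card_subtype_compl, Fintype.card_subtype_eq, Fintype.card_fin]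

lemma union_card {m : ℕ} {B : Type*} [Fintype B] (Q : B → Prop) [DecidablePred Q] :
    Fintype.card {X : Fin m → B // ∃ j, Q (X j)}
      ≤ m * (Fintype.card {b : B // Q b} * Fintype.card B ^ (m - 1)) := by
  classical
  rw [Fintype.card_subtype]
  have hsub : (Finset.univ.filter fun X : Fin m → B => ∃ j, Q (X j))
      ⊆ Finset.univ.biUnion fun j : Fin m => Finset.univ.filter fun X => Q (X j) := by
    intro X hX
    obtain ⟨j, hj⟩ := (Finset.mem_filter.mp hX).2
    exact Finset.mem_biUnion.mpr ⟨j, Finset.mem_univ _, Finset.mem_filter.mpr ⟨Finset.mem_univ _, hj⟩⟩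
  have h1 := Finset.card_le_card hsub
  have h2 : (Finset.univ.biUnion fun j : Fin m => Finset.univ.filter fun X : Fin m → B => Q (X j)).card
      ≤ ∑ j : Fin m, (Finset.univ.filter fun X : Fin m → B => Q (X j)).card :=
    Finset.card_biUnion_le
  have h3 : ∀ j : Fin m, (Finset.univ.filter fun X : Fin m → B => Q (X j)).card
      = Fintype.card {b : B // Q b} * Fintype.card B ^ (m - 1) := by
    intro j
    rw [← Fintype.card_subtype]
    exact slice_card j Q
  have h4 : ∑ j : Fin m, (Finset.univ.filter fun X : Fin m → B => Q (X j)).card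
      = m * (Fintype.card {b : B // Q b} * Fintype.card B ^ (m - 1)) := by
    rw [Finset.sum_congr rfl fun j _ => h3 j, Finset.sum_const, Finset.card_univ,
      Fintype.card_fin, smul_eq_mul]
  exact h1.trans (h2.trans h4.le)

/-- Loosened random coding union bound for the constant Lee weight channel
under ML decoding, with the exponent rewritten via the Kullback–Leibler
divergence `D(B_δ ‖ U) = Σ_i B_δ(i) log₂ (B_δ(i)/(1/q))`. -/
theorem stmt7 (q n M t : ℕ) [NeZero q] (hq : 2 ≤ q) (hn : 1 ≤ n) (hM : 2 ≤ M)
    (ht0 : 0 < t) (ht1 : t < n * (q / 2))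
    (δ β : ℝ) (hδ : δ = (t : ℝ) / n)
    (hβ : numFun q β = δ * Zfun q β) (y : Fin n → ZMod q) :
    ((Nat.card {X : Fin (M - 1) → Fin n → ZMod q // ∃ j, leeWtV (y - X j) = t} : ℝ)
        / (q : ℝ) ^ (n * (M - 1))
      ≤ 2 ^ (-(n : ℝ) * max 0 (Real.logb 2 q - entB q β - Real.logb 2 M / n)))
    ∧ (2 : ℝ) ^ (-(n : ℝ) * max 0 (Real.logb 2 q - entB q β - Real.logb 2 M / n))
      = 2 ^ (-(n : ℝ) * max 0
          ((∑ i ∈ Finset.range q, boltz q β i * Real.logb 2 (boltz q β i / (1 / q)))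
            - Real.logb 2 M / n)) := by
  classical
  have hq1 : 1 ≤ q := by omega
  have hZ : 0 < Zfun q β := Z_pos hq1 β
  have hn0 : (0 : ℝ) < n := by exact_mod_cast hn
  have hq0 : (0 : ℝ) < q := by exact_mod_cast hq1
  have hM0 : (0 : ℝ) < M := by positivity
  have harith1 : n * (M - 1) = n * (M - 2) + n := by
    rw [show M - 1 = (M - 2) + 1 from by omega, Nat.mul_add, Nat.mul_one]
  have harith2 : n * (M - 2) = n * (M - 1 - 1) := by
    rw [show M - 2 = M - 1 - 1 from by omega]
  constructor
  · -- Part 1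
    set C := Nat.card {X : Fin (M - 1) → Fin n → ZMod q // ∃ j, leeWtV (y - X j) = t} with hCdef
    set N := Nat.card {z : Fin n → ZMod q // leeWtV z = t} with hNdef
    have hNy : Nat.card {x : Fin n → ZMod q // leeWtV (y - x) = t} = N :=
      Nat.card_congr ((Equiv.subLeft y).subtypeEquiv fun x => Iff.rfl)
    have hcardB : Fintype.card (Fin n → ZMod q) = q ^ n := by
      rw [Fintype.card_fun, ZMod.card, Fintype.card_fin]
    have hC : C ≤ (M - 1) * (N * (q ^ n) ^ (M - 1 - 1)) := by
      rw [hCdef, Nat.card_eq_fintype_card]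
      calc Fintype.card {X : Fin (M - 1) → Fin n → ZMod q // ∃ j, leeWtV (y - X j) = t}
          ≤ (M - 1) * (Fintype.card {x : Fin n → ZMod q // leeWtV (y - x) = t}
              * Fintype.card (Fin n → ZMod q) ^ (M - 1 - 1)) :=
            union_card (fun x => leeWtV (y - x) = t)
        _ = (M - 1) * (N * (q ^ n) ^ (M - 1 - 1)) := by
            rw [← Nat.card_eq_fintype_card, hNy, hcardB]
    set A := Real.exp (β * t) * Zfun q β ^ n with hAdef
    have hApos : 0 < A := by positivity
    have hN : (N : ℝ) ≤ A := by
      have h := card_wt_le q n β t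
      rw [← hNdef] at h
      have key : Real.exp (-β * t) * Real.exp (β * t) = 1 := by
        rw [← Real.exp_add]
        norm_num
      calc (N : ℝ) = ((N : ℝ) * Real.exp (-β * t)) * Real.exp (β * t) := by
            rw [mul_assoc, key, mul_one]
        _ ≤ Zfun q β ^ n * Real.exp (β * t) :=
            mul_le_mul_of_nonneg_right h (Real.exp_pos _).le
        _ = A := by rw [hAdef]; ring
    have hA2 : (2 : ℝ) ^ ((n : ℝ) * entB q β) = A := by
      rw [entB_eq hq1 hβ, Real.rpow_def_of_pos (by norm_num : (0:ℝ) < 2)]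
      have hl2 : Real.log 2 ≠ 0 := (Real.log_pos (by norm_num)).ne'
      have : Real.log 2 * ((n : ℝ) * ((β * δ + Real.log (Zfun q β)) / Real.log 2))
          = (n : ℝ) * (β * δ) + (n : ℝ) * Real.log (Zfun q β) := by
        field_simp
      rw [this, Real.exp_add, hAdef]
      congr 1
      · congr 1
        rw [hδ]; field_simp
      · rw [Real.exp_nat_mul, Real.exp_log hZ]
    set E := Real.logb 2 q - entB q β - Real.logb 2 M / n with hEdef
    rcases le_total E 0 with hE0 | hE0
    · rw [max_eq_left hE0, mul_zero, Real.rpow_zero]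
      rw [div_le_one (by positivity)]
      have hC1 : C ≤ q ^ (n * (M - 1)) := by
        rw [hCdef, Nat.card_eq_fintype_card]
        calc Fintype.card {X : Fin (M - 1) → Fin n → ZMod q // ∃ j, leeWtV (y - X j) = t}
            ≤ Fintype.card (Fin (M - 1) → Fin n → ZMod q) := Fintype.card_subtype_le _
          _ = q ^ (n * (M - 1)) := by
              rw [Fintype.card_fun, hcardB, Fintype.card_fin, ← pow_mul]
      exact_mod_cast hC1
    · rw [max_eq_right hE0]
      have hrhs : (2 : ℝ) ^ (-(n : ℝ) * E) = (M : ℝ) * A / (q : ℝ) ^ n := by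
        have h1 : -(n : ℝ) * E = (n : ℝ) * entB q β + Real.logb 2 M - (n : ℝ) * Real.logb 2 q := by
          rw [hEdef]; field_simp; ring
        have hM2 : (2 : ℝ) ^ Real.logb 2 (M : ℝ) = (M : ℝ) :=
          Real.rpow_logb (by norm_num) (by norm_num) hM0
        have hqn : (2 : ℝ) ^ ((n : ℝ) * Real.logb 2 (q : ℝ)) = (q : ℝ) ^ n := by
          rw [mul_comm, Real.rpow_mul (by norm_num : (0:ℝ) ≤ 2),
            Real.rpow_logb (by norm_num) (by norm_num) hq0, Real.rpow_natCast]
        rw [h1, Real.rpow_sub (by norm_num : (0:ℝ) < 2), Real.rpow_add (by norm_num : (0:ℝ) < 2),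
          hA2, hM2, hqn]
        ring
      rw [hrhs]
      have hsplit : (q : ℝ) ^ (n * (M - 1)) = (q : ℝ) ^ (n * (M - 2)) * (q : ℝ) ^ n := by
        rw [harith1, pow_add]
      have hCreal : (C : ℝ) ≤ (M : ℝ) * A * (q : ℝ) ^ (n * (M - 2)) := by
        have h1 : (C : ℝ) ≤ ((M - 1 : ℕ) : ℝ) * ((N : ℝ) * ((q : ℝ) ^ n) ^ (M - 1 - 1)) := by
          exact_mod_cast hC
        have h2 : ((M - 1 : ℕ) : ℝ) ≤ (M : ℝ) := by exact_mod_cast Nat.sub_le M 1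
        have h3 : ((q : ℝ) ^ n) ^ (M - 1 - 1) = (q : ℝ) ^ (n * (M - 2)) := by
          rw [← pow_mul, harith2]
        rw [h3] at h1
        calc (C : ℝ) ≤ ((M - 1 : ℕ) : ℝ) * ((N : ℝ) * (q : ℝ) ^ (n * (M - 2))) := h1
          _ ≤ (M : ℝ) * (A * (q : ℝ) ^ (n * (M - 2))) := by
              apply mul_le_mul h2 (mul_le_mul_of_nonneg_right hN (by positivity))
                (by positivity) (by positivity)
          _ = (M : ℝ) * A * (q : ℝ) ^ (n * (M - 2)) := by ring
      rw [div_le_div_iff₀ (by positivity) (by positivity), hsplit]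
      calc (C : ℝ) * (q : ℝ) ^ n ≤ ((M : ℝ) * A * (q : ℝ) ^ (n * (M - 2))) * (q : ℝ) ^ n :=
            mul_le_mul_of_nonneg_right hCreal (by positivity)
        _ = (M : ℝ) * A * ((q : ℝ) ^ (n * (M - 2)) * (q : ℝ) ^ n) := by ring
  · -- Part 2
    congr 2
    have hb : ∀ i ∈ Finset.range q, boltz q β i * Real.logb 2 (boltz q β i / (1 / q))
        = boltz q β i * Real.logb 2 (boltz q β i) + boltz q β i * Real.logb 2 q := by
      intro i _
      have hbpos : 0 < boltz q β i := div_pos (Real.exp_pos _) hZ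
      rw [div_div_eq_mul_div, div_one, Real.logb_mul hbpos.ne' hq0.ne']
      ring
    rw [Finset.sum_congr rfl hb, Finset.sum_add_distrib, ← Finset.sum_mul, sum_boltz hq1,
      one_mul, entB]
    ring
end

section
/- (Loosened random coding union bound, memoryless Lee channel.) Let q ≥ 2, n ≥ 1, M ≥ 2 be integers, let 0 < δ ≤ δ_q, and set R₂ = (log₂ M)/n. Fix x ∈ Z_q^n, let E = (E_1,…,E_n) have i.i.d. entries with distribution B_δ, set y = x + E and L = w_L(E), and let X̃_2,…,X̃_M be independent random vectors uniform on Z_q^n, independent of E. Then P(∃ j ∈ {2,…,M} : w_L(y − X̃_j) ≤ L) ≤ E[ 2^{−n [log₂ q − H⁺_{L/n} − R₂]⁺} ], where the expectation is over the random Lee weight L. -/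
/-- The Boltzmann pmf on `Z_q` with parameter `β`, as a function on `ZMod q`. -/
noncomputable def boltZ (q : ℕ) (β : ℝ) (a : ZMod q) : ℝ :=
  Real.exp (-β * (min a.val (q - a.val) : ℝ)) / Zfun q β

/-- `δ_q`, the mean Lee weight of a uniform element of `Z_q`. -/
noncomputable def deltaQ (q : ℕ) : ℝ :=
  if q % 2 = 0 then (q : ℝ) / 4 else ((q : ℝ) ^ 2 - 1) / (4 * q)

open scoped Classical in
/-- The Boltzmann parameter matched to a mean Lee weight `δ` (when it exists). -/
noncomputable def betaOf (q : ℕ) (δ : ℝ) : ℝ :=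
  if h : ∃ β : ℝ, numFun q β = δ * Zfun q β then h.choose else 0

/-- `H_δ`, the entropy of the Boltzmann distribution with mean Lee weight `δ`. -/
noncomputable def Hof (q : ℕ) (δ : ℝ) : ℝ := entB q (betaOf q δ)

/-- `H_δ⁺`: equal to `H_δ` for `0 ≤ δ ≤ δ_q`, and to `log₂ q` for `δ > δ_q`. -/
noncomputable def HplusOf (q : ℕ) (δ : ℝ) : ℝ :=
  if δ = 0 then 0 else if δ ≤ deltaQ q then Hof q δ else Real.logb 2 q


/-!
For a fixed error vector `e` the event is a union over the `M - 1` random codewords, each of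
which falls into the Lee ball of radius `L = w_L(e)` around `y` with probability
`|B_L| / q^n`. The Chernoff bound `|B_L| ≤ e^{βL} Z(β)^n`, taken at the `β ≥ 0` whose
Boltzmann distribution has mean `L/n`, equals `2^{n H_{L/n}}` because that distribution has
entropy `β (L/n) log₂ e + log₂ Z(β)`; beyond `δ_q` the ball is bounded by all of `Z_q^n`.
Capping the union bound at `1` gives the bound for each `e`, which is then averaged.
-/

open Finset Real

lemma sum_range_leeW : ∀ q : ℕ, ∑ i ∈ range q, leeW q i = q * q / 4
  | 0 => rfl
  | 1 => rfl
  | q + 2 => by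
    have hshift : ∀ i ∈ range (q + 1), leeW (q + 2) (i + 1) = leeW q i + 1 := by
      intro i hi
      simp only [mem_range] at hi
      unfold leeW
      omega
    rw [sum_range_succ', sum_congr rfl hshift, sum_add_distrib, sum_range_succ, sum_range_leeW q]
    simp only [leeW, sum_const, card_range, smul_eq_mul, mul_one]
    have : (q + 2) * (q + 2) = q * q + 4 * (q + 1) := by ring
    omega

lemma sum_range_leeW_eq_mul_deltaQ (q : ℕ) :
    ∑ i ∈ range q, (leeW q i : ℝ) = q * deltaQ q := by
  rw [← Nat.cast_sum, sum_range_leeW, deltaQ]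
  rcases Nat.even_or_odd' q with ⟨m, rfl | rfl⟩
  · rw [if_pos (by omega), show 2 * m * (2 * m) / 4 = m * m by
      rw [show 2 * m * (2 * m) = 4 * (m * m) by ring]; omega]
    push_cast
    ring
  · rw [if_neg (by omega), show (2 * m + 1) * (2 * m + 1) / 4 = m * (m + 1) by
      rw [show (2 * m + 1) * (2 * m + 1) = 4 * (m * (m + 1)) + 1 by ring]; omega]
    field_simp
    push_cast
    ring

lemma Zfun_pos {q : ℕ} (hq : 0 < q) (β : ℝ) : 0 < Zfun q β :=
  sum_pos (fun _ _ => exp_pos _) (nonempty_range_iff.mpr hq.ne')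

lemma one_le_Zfun {q : ℕ} (hq : 0 < q) (β : ℝ) : 1 ≤ Zfun q β := by
  have h0 : 0 ∈ range q := mem_range.mpr hq
  calc (1 : ℝ) = exp (-β * (leeW q 0 : ℝ)) := by simp [leeW]
    _ ≤ Zfun q β := single_le_sum (f := fun i => exp (-β * (leeW q i : ℝ)))
      (fun i _ => (exp_pos _).le) h0

lemma pos_of_deltaQ_pos {q : ℕ} (h : 0 < deltaQ q) : 0 < q := by
  rcases Nat.eq_zero_or_pos q with rfl | hq
  · simp [deltaQ] at h
  · exact hq

/-- Chebyshev's sum inequality for the increasing function `x ↦ exp (-β x)`. -/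
lemma sum_sub_mul_exp_pos {ι : Type*} {s : Finset ι} {w : ι → ℝ} {d β : ℝ} (hβ : β < 0)
    (hd : ∑ i ∈ s, (w i - d) = 0) {i₀ : ι} (hi₀ : i₀ ∈ s) (hne : w i₀ ≠ d) :
    0 < ∑ i ∈ s, (w i - d) * exp (-β * w i) := by
  have hterm : ∀ a, a ≠ d → 0 < (a - d) * (exp (-β * a) - exp (-β * d)) := by
    intro a ha
    rcases ha.lt_or_gt with h | h
    · exact mul_pos_of_neg_of_neg (by linarith) (by simp only [sub_neg, exp_lt_exp]; nlinarith)
    · exact mul_pos (by linarith) (by simp only [sub_pos, exp_lt_exp]; nlinarith)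
  have hcentre : ∑ i ∈ s, (w i - d) * exp (-β * w i)
      = ∑ i ∈ s, (w i - d) * (exp (-β * w i) - exp (-β * d)) := by
    simp only [mul_sub, sum_sub_distrib, ← sum_mul, hd, zero_mul, sub_zero]
  rw [hcentre]
  refine sum_pos' (fun i _ => ?_) ⟨i₀, hi₀, hterm _ hne⟩
  by_cases h : w i = d
  · simp [h]
  · exact (hterm _ h).le

lemma numFun_sub_mul_Zfun (q : ℕ) (β d : ℝ) :
    numFun q β - d * Zfun q β
      = ∑ i ∈ range q, ((leeW q i : ℝ) - d) * exp (-β * leeW q i) := by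
  simp only [numFun, Zfun, mul_sum, ← sum_sub_distrib, sub_mul]

lemma nonneg_of_numFun_eq_mul_Zfun {q : ℕ} {δ β : ℝ} (hδ0 : 0 < δ) (hδ1 : δ ≤ deltaQ q)
    (hβ : numFun q β = δ * Zfun q β) : 0 ≤ β := by
  by_contra! hneg
  -- For `β < 0` the weights favour large Lee weights, pushing the mean above its uniform
  -- value `δ_q`.
  have hq := pos_of_deltaQ_pos (hδ0.trans_le hδ1)
  have hpos := sum_sub_mul_exp_pos (s := range q) (w := fun i => (leeW q i : ℝ))
    (d := deltaQ q) hneg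
    (by rw [sum_sub_distrib, sum_range_leeW_eq_mul_deltaQ]; simp)
    (mem_range.mpr hq) (by simp only [leeW]; simp; linarith)
  rw [← numFun_sub_mul_Zfun, hβ] at hpos
  nlinarith [Zfun_pos hq β]

lemma numFun_le_mul_exp_neg (q : ℕ) {β : ℝ} (hβ : 0 ≤ β) :
    numFun q β ≤ (q * deltaQ q) * exp (-β) := by
  rw [← sum_range_leeW_eq_mul_deltaQ, sum_mul]
  refine sum_le_sum fun i _ => ?_
  rcases Nat.eq_zero_or_pos (leeW q i) with h | h
  · simp [h]
  · have : (1 : ℝ) ≤ leeW q i := by exact_mod_cast h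
    gcongr
    nlinarith

lemma exists_numFun_eq_mul_Zfun {q : ℕ} {δ : ℝ} (hδ0 : 0 < δ) (hδ1 : δ ≤ deltaQ q) :
    ∃ β, numFun q β = δ * Zfun q β := by
  have hdq : 0 < deltaQ q := hδ0.trans_le hδ1
  have hq := pos_of_deltaQ_pos hdq
  have hq1 : (1 : ℝ) ≤ q := by exact_mod_cast hq
  set g : ℝ → ℝ := fun b => numFun q b - δ * Zfun q b
  have hg : Continuous g := by simp only [g, numFun, Zfun]; fun_prop
  -- `b₁` makes the bound `numFun q b ≤ q δ_q e^{-b}` equal to `δ ≤ δ Z(b)`.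
  set b₁ := log (q * deltaQ q / δ)
  have hratio : 1 ≤ q * deltaQ q / δ := by rw [le_div_iff₀ hδ0]; nlinarith
  have hb₁ : 0 ≤ b₁ := log_nonneg hratio
  have hg0 : 0 ≤ g 0 := by
    simp only [g, numFun, Zfun, neg_zero, zero_mul, exp_zero, mul_one,
      sum_range_leeW_eq_mul_deltaQ, sum_const, card_range, nsmul_eq_mul]
    nlinarith
  have hgb₁ : g b₁ ≤ 0 := by
    have hexp : q * deltaQ q * exp (-b₁) = δ := by
      rw [exp_neg, exp_log (by linarith)]
      field_simp
    have := numFun_le_mul_exp_neg q hb₁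
    nlinarith [one_le_Zfun hq b₁]
  obtain ⟨β, -, hβ⟩ := intermediate_value_Icc' hb₁ hg.continuousOn ⟨hgb₁, hg0⟩
  exact ⟨β, sub_eq_zero.mp hβ⟩

lemma numFun_betaOf {q : ℕ} {δ : ℝ} (hδ0 : 0 < δ) (hδ1 : δ ≤ deltaQ q) :
    numFun q (betaOf q δ) = δ * Zfun q (betaOf q δ) := by
  have h := exists_numFun_eq_mul_Zfun hδ0 hδ1
  rw [betaOf, dif_pos h]
  exact h.choose_spec

lemma entB_eq_of_numFun_eq {q : ℕ} (hq : 0 < q) {δ β : ℝ} (h : numFun q β = δ * Zfun q β) :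
    entB q β = β * δ / log 2 + logb 2 (Zfun q β) := by
  have hZ := (Zfun_pos hq β).ne'
  have hlogb : ∀ i, logb 2 (boltz q β i) = -β * leeW q i / log 2 - logb 2 (Zfun q β) := by
    intro i
    rw [boltz, logb_div (exp_ne_zero _) hZ, logb, log_exp]
  have hmean : ∑ i ∈ range q, boltz q β i * leeW q i = δ := by
    simp only [boltz, div_mul_eq_mul_div, ← sum_div]
    rw [div_eq_iff hZ, ← h, numFun]
    simp only [mul_comm]
  have hmass : ∑ i ∈ range q, boltz q β i = 1 := by
    simp only [boltz, ← sum_div]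
    exact div_self hZ
  calc entB q β = β / log 2 * ∑ i ∈ range q, boltz q β i * leeW q i
        + logb 2 (Zfun q β) * ∑ i ∈ range q, boltz q β i := by
        simp only [entB, hlogb, mul_sum, ← sum_add_distrib, ← sum_neg_distrib]
        exact sum_congr rfl fun i _ => by ring
    _ = β * δ / log 2 + logb 2 (Zfun q β) := by rw [hmean, hmass]; ring

lemma two_rpow_mul_logb (n : ℕ) {c : ℝ} (hc : 0 < c) : (2 : ℝ) ^ (n * logb 2 c) = c ^ n := by
  rw [mul_comm, rpow_mul zero_le_two, rpow_logb zero_lt_two (by norm_num) hc, rpow_natCast]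

lemma sum_zmod_val {R : Type*} [AddCommMonoid R] (q : ℕ) [NeZero q] (g : ℕ → R) :
    ∑ a : ZMod q, g a.val = ∑ i ∈ range q, g i := by
  obtain ⟨k, rfl⟩ := Nat.exists_eq_succ_of_ne_zero (NeZero.ne q)
  exact Fin.sum_univ_eq_sum_range g (k + 1)

lemma sum_exp_neg_mul_leeWtV (q n : ℕ) [NeZero q] (β : ℝ) :
    ∑ v : Fin n → ZMod q, exp (-β * leeWtV v) = Zfun q β ^ n := by
  rw [Zfun, ← sum_zmod_val q (fun i : ℕ => exp (-β * (leeW q i : ℝ))), Fintype.sum_pow]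
  refine sum_congr rfl fun v _ => ?_
  rw [← exp_sum, leeWtV, Nat.cast_sum, mul_sum]
  rfl

lemma card_leeWtV_le_le_exp_mul (q n : ℕ) [NeZero q] {β : ℝ} (hβ : 0 ≤ β) (L : ℕ) :
    (Nat.card {v : Fin n → ZMod q // leeWtV v ≤ L} : ℝ) ≤ exp (β * L) * Zfun q β ^ n := by
  classical
  rw [Nat.card_eq_fintype_card, Fintype.card_subtype, ← sum_exp_neg_mul_leeWtV,
    ← div_le_iff₀' (exp_pos _), div_eq_mul_inv, ← exp_neg, ← neg_mul]
  calc (#{v : Fin n → ZMod q | leeWtV v ≤ L} : ℝ) * exp (-β * L)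
      = ∑ v ∈ {v : Fin n → ZMod q | leeWtV v ≤ L}, exp (-β * L) := by
        rw [sum_const, nsmul_eq_mul]
    _ ≤ ∑ v ∈ {v : Fin n → ZMod q | leeWtV v ≤ L}, exp (-β * leeWtV v) := by
        refine sum_le_sum fun v hv => exp_le_exp.mpr ?_
        have : (leeWtV v : ℝ) ≤ L := by exact_mod_cast (mem_filter.mp hv).2
        nlinarith
    _ ≤ ∑ v, exp (-β * leeWtV v) :=
        sum_le_sum_of_subset_of_nonneg (filter_subset _ _) fun _ _ _ => (exp_pos _).le

lemma eq_zero_of_leeWtV_eq_zero {q n : ℕ} [NeZero q] {v : Fin n → ZMod q} (h : leeWtV v = 0) :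
    v = 0 := by
  funext k
  have hk := (sum_eq_zero_iff.mp h) k (mem_univ k)
  have := ZMod.val_lt (v k)
  exact (ZMod.val_eq_zero (v k)).mp (by omega)

lemma card_leeWtV_le_le_one {q n L : ℕ} [NeZero q] (h : (L : ℝ) / n = 0) :
    Nat.card {v : Fin n → ZMod q // leeWtV v ≤ L} ≤ 1 := by
  rw [Finite.card_le_one_iff_subsingleton]
  refine ⟨fun v w => Subtype.ext ?_⟩
  rcases div_eq_zero_iff.mp h with hL | hn
  · have hL : L = 0 := by exact_mod_cast hL
    subst hL
    rw [eq_zero_of_leeWtV_eq_zero (Nat.le_zero.mp v.2),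
      eq_zero_of_leeWtV_eq_zero (Nat.le_zero.mp w.2)]
  · have hn : n = 0 := by exact_mod_cast hn
    subst hn
    exact Subsingleton.elim _ _

lemma card_leeWtV_le_le_two_rpow (q n : ℕ) [NeZero q] (L : ℕ) :
    (Nat.card {v : Fin n → ZMod q // leeWtV v ≤ L} : ℝ) ≤ 2 ^ (n * HplusOf q (L / n)) := by
  have hq : 0 < q := Nat.pos_of_neZero q
  unfold HplusOf
  split_ifs with h0 hδ
  · rw [mul_zero, rpow_zero]
    exact_mod_cast card_leeWtV_le_le_one h0
  · have hpos : 0 < (L : ℝ) / n := lt_of_le_of_ne (by positivity) (Ne.symm h0)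
    have hn : (n : ℝ) ≠ 0 := by rintro hn; simp [hn] at h0
    have hβ := numFun_betaOf hpos hδ
    calc _ ≤ exp (betaOf q (L / n) * L) * Zfun q (betaOf q (L / n)) ^ n :=
          card_leeWtV_le_le_exp_mul q n (nonneg_of_numFun_eq_mul_Zfun hpos hδ hβ) L
      _ = 2 ^ (n * Hof q (L / n)) := by
          rw [Hof, entB_eq_of_numFun_eq hq hβ, mul_add, rpow_add zero_lt_two,
            two_rpow_mul_logb n (Zfun_pos hq _), rpow_def_of_pos zero_lt_two]
          congr 2
          field_simp
  · calc _ ≤ (Nat.card (Fin n → ZMod q) : ℝ) := by exact_mod_cast Finite.card_subtype_le _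
      _ = 2 ^ (n * logb 2 q) := by
          rw [two_rpow_mul_logb n (by exact_mod_cast hq), Nat.card_fun, Nat.card_zmod,
            Nat.card_eq_fintype_card, Fintype.card_fin, Nat.cast_pow]

section UnionBound

variable {ι V : Type*} [Fintype ι] [Fintype V]

lemma card_subtype_apply_mul_card [DecidableEq ι] (P : V → Prop) (j : ι) :
    Nat.card {X : ι → V // P (X j)} * Fintype.card V
      = Nat.card {v // P v} * Fintype.card V ^ Fintype.card ι := by
  have hsplit : {X : ι → V // P (X j)} ≃ {v // P v} × ({i // i ≠ j} → V) :=
    ((Equiv.funSplitAt j V).subtypeEquiv fun _ => Iff.rfl).trans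
      Equiv.prodSubtypeFstEquivSubtypeProd
  have hcompl : Fintype.card {i // i ≠ j} + 1 = Fintype.card ι := by
    rw [Fintype.card_subtype_compl, Fintype.card_subtype_eq]
    exact Nat.sub_add_cancel (Fintype.card_pos_iff.mpr ⟨j⟩)
  rw [Nat.card_congr hsplit, Nat.card_prod, Nat.card_fun, Nat.card_eq_fintype_card (α := V),
    Nat.card_eq_fintype_card (α := {i // i ≠ j}), ← hcompl, pow_succ, mul_assoc]

lemma card_subtype_exists_le_sum (P : V → Prop) :
    Nat.card {X : ι → V // ∃ j, P (X j)} ≤ ∑ j, Nat.card {X : ι → V // P (X j)} := by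
  classical
  simp only [Nat.card_eq_fintype_card, Fintype.card_subtype]
  calc #{X : ι → V | ∃ j, P (X j)} ≤ #(univ.biUnion fun j => {X : ι → V | P (X j)}) :=
        card_le_card fun X hX => by simpa using hX
    _ ≤ ∑ j, #{X : ι → V | P (X j)} := card_biUnion_le

lemma card_subtype_exists_div_le [Nonempty V] (P : V → Prop) :
    (Nat.card {X : ι → V // ∃ j, P (X j)} : ℝ) / Fintype.card V ^ Fintype.card ι
      ≤ Fintype.card ι * (Nat.card {v // P v} / Fintype.card V) := by
  classical
  have hV : (0 : ℝ) < Fintype.card V := by exact_mod_cast Fintype.card_pos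
  have hcoord : ∀ j : ι, (Nat.card {X : ι → V // P (X j)} : ℝ)
      = Nat.card {v // P v} / Fintype.card V * Fintype.card V ^ Fintype.card ι := fun j => by
    rw [div_mul_eq_mul_div, eq_div_iff hV.ne']
    exact_mod_cast card_subtype_apply_mul_card P j
  rw [div_le_iff₀ (by positivity)]
  calc (Nat.card {X : ι → V // ∃ j, P (X j)} : ℝ)
      ≤ ∑ j, (Nat.card {X : ι → V // P (X j)} : ℝ) := by
        exact_mod_cast card_subtype_exists_le_sum P
    _ = _ := by simp only [hcoord, sum_const, card_univ, nsmul_eq_mul, mul_assoc]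

end UnionBound

lemma card_leeWtV_sub_le {q n : ℕ} (y : Fin n → ZMod q) (L : ℕ) :
    Nat.card {v : Fin n → ZMod q // leeWtV (y - v) ≤ L}
      = Nat.card {v : Fin n → ZMod q // leeWtV v ≤ L} :=
  Nat.card_congr ((Equiv.subLeft y).subtypeEquiv fun _ => Iff.rfl)

lemma card_exists_leeWtV_sub_le_div_le (q : ℕ) [NeZero q] {n M : ℕ} (hn : 0 < n) (hM : 0 < M)
    (y : Fin n → ZMod q) (L : ℕ) :
    (Nat.card {X : Fin (M - 1) → Fin n → ZMod q // ∃ j, leeWtV (y - X j) ≤ L} : ℝ)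
        / (q : ℝ) ^ (n * (M - 1))
      ≤ 2 ^ (-(n : ℝ) * max 0 (logb 2 q - HplusOf q ((L : ℝ) / n) - logb 2 M / n)) := by
  have hq : (0 : ℝ) < q := by exact_mod_cast Nat.pos_of_neZero q
  have hcardV : (Fintype.card (Fin n → ZMod q) : ℝ) = q ^ n := by simp
  set A := logb 2 q - HplusOf q ((L : ℝ) / n) - logb 2 M / n
  set N := (Nat.card {X : Fin (M - 1) → Fin n → ZMod q // ∃ j, leeWtV (y - X j) ≤ L} : ℝ)
  have hle_one : N / (q : ℝ) ^ (n * (M - 1)) ≤ 1 := by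
    refine div_le_one_of_le₀ ?_ (by positivity)
    calc N ≤ (Nat.card (Fin (M - 1) → Fin n → ZMod q) : ℝ) :=
          Nat.cast_le.mpr (Finite.card_subtype_le _)
      _ = (q : ℝ) ^ (n * (M - 1)) := by simp [pow_mul]
  have hunion : N / (q : ℝ) ^ (n * (M - 1)) ≤ 2 ^ (-(n : ℝ) * A) := calc
    _ ≤ ((M - 1 : ℕ) : ℝ)
          * ((Nat.card {v : Fin n → ZMod q // leeWtV v ≤ L} : ℝ) / (q : ℝ) ^ n) := by
        have h := card_subtype_exists_div_le (ι := Fin (M - 1)) fun v => leeWtV (y - v) ≤ L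
        rwa [Fintype.card_fin, hcardV, ← pow_mul, card_leeWtV_sub_le] at h
    _ ≤ (M : ℝ) * ((2 : ℝ) ^ ((n : ℝ) * HplusOf q ((L : ℝ) / n)) / (q : ℝ) ^ n) := by
        gcongr
        · exact_mod_cast Nat.sub_le M 1
        · exact card_leeWtV_le_le_two_rpow q n L
    _ = 2 ^ (-(n : ℝ) * A) := by
        have hn' : (n : ℝ) ≠ 0 := by positivity
        rw [show -(n : ℝ) * A = logb 2 M + n * HplusOf q (L / n) - n * logb 2 q by
              simp only [A]; field_simp; ring,
          rpow_sub zero_lt_two, rpow_add zero_lt_two, two_rpow_mul_logb n hq,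
          rpow_logb zero_lt_two (by norm_num) (by exact_mod_cast hM), mul_div_assoc]
  rcases le_total A 0 with hA | hA
  · rwa [max_eq_left hA, mul_zero, rpow_zero]
  · rwa [max_eq_right hA]

theorem stmt11_general (q n M : ℕ) [NeZero q] (hn : 1 ≤ n) (hM : 2 ≤ M)
    (β : ℝ) (x : Fin n → ZMod q) :
    ∑ e : Fin n → ZMod q, (∏ k, boltZ q β (e k)) *
        ((Nat.card {X : Fin (M - 1) → Fin n → ZMod q //
            ∃ j, leeWtV ((x + e) - X j) ≤ leeWtV e} : ℝ) / (q : ℝ) ^ (n * (M - 1)))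
      ≤ ∑ e : Fin n → ZMod q, (∏ k, boltZ q β (e k)) *
          2 ^ (-(n : ℝ) * max 0 (Real.logb 2 q
              - HplusOf q ((leeWtV e : ℝ) / n) - Real.logb 2 M / n)) := by
  refine sum_le_sum fun e _ => mul_le_mul_of_nonneg_left ?_ ?_
  · exact card_exists_leeWtV_sub_le_div_le q hn (by omega) (x + e) (leeWtV e)
  · exact prod_nonneg fun k _ =>
      div_nonneg (exp_pos _).le (Zfun_pos (Nat.pos_of_neZero q) β).le

/-- Loosened random coding union bound for the memoryless Lee channel: with the
error vector `E` having i.i.d. `B_δ` entries and `M-1` i.i.d. uniform competing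
codewords, the probability that some competitor is at Lee distance at most
`L = w_L(E)` from `y = x + E` is at most `E[2^{-n [log₂ q - H⁺_{L/n} - R₂]⁺}]`. -/
theorem stmt11 (q n M : ℕ) [NeZero q] (hq : 2 ≤ q) (hn : 1 ≤ n) (hM : 2 ≤ M)
    (δ β : ℝ) (hδ0 : 0 < δ) (hδ1 : δ ≤ deltaQ q)
    (hβ : numFun q β = δ * Zfun q β) (x : Fin n → ZMod q) :
    ∑ e : Fin n → ZMod q, (∏ k, boltZ q β (e k)) *
        ((Nat.card {X : Fin (M - 1) → Fin n → ZMod q //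
            ∃ j, leeWtV ((x + e) - X j) ≤ leeWtV e} : ℝ) / (q : ℝ) ^ (n * (M - 1)))
      ≤ ∑ e : Fin n → ZMod q, (∏ k, boltZ q β (e k)) *
          2 ^ (-(n : ℝ) * max 0 (Real.logb 2 q
              - HplusOf q ((leeWtV e : ℝ) / n) - Real.logb 2 M / n)) :=
  stmt11_general q n M hn hM β x
end
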